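/- arXiv:2601.03809 — 2 statements merged into one kernel-verified Lean document; each statement's English description precedes it below -/
import Mathlib

section
/- Let M be a matroid on a finite ground set E, let p ≥ 2 and l ≥ 1 be integers, and let (n_1, …, n_p) and (m_1, …, m_p) be p-tuples of integers with n_1 + ⋯ + n_p = m_1 + ⋯ + m_p = 0. Then the coefficientwise inequality f_{l+n_1}(M) f_{l+n_2}(M) ⋯ f_{l+n_p}(M) ≥ f_{l+m_1}(M) f_{l+m_2}(M) ⋯ f_{l+m_p}(M) holds if and only if for every integer k ≤ l and every matroid N = M[𝐗, 𝐪] of size pk and depth l − k, where 𝐗 = (X_1, …, X_p) is a p-tuple of pairwise disjoint subsets of E and 𝐪 = (1, 2, …, p−1), one has π_{(k+n_1, k+n_2, …, k+n_p)}(N) ≥ π_{(k+m_1, k+m_2, …, k+m_p)}(N). -/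
/-!
Compare the two sides coefficient by coefficient. The coefficient of `x^d` in
`∏_j f_{l+c_j}(M)` counts the tuples `(I_1, …, I_p)` of independent sets with `|I_j| = l + c_j`
in which every `e` lies in exactly `d(e)` of the `I_j`. Given `𝐗` and a basis `B` of `X_p`, let
`d = j` on `X_j` (`j < p`), `d = p` on `B` and `d = 0` elsewhere. An ordered partition of
`M[𝐗, 𝐪]` into independent blocks of sizes `k + c_j`, `k = l - |B|`, gives the `j` copies of each
`e ∈ X_j` distinct colours, and `I_s = {e : some copy of e has colour s} ∪ B` is such a tuple
(contracting `X_p` is what adds `B`). Each tuple arises from exactly `∏_{e ∉ X_p} d(e)!`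
partitions, so `π_{(k + c_j)}(M[𝐗, 𝐪]) = ∏_{e ∉ X_p} d(e)! · [x^d] ∏_j f_{l+c_j}(M)`.
Conversely, every `d` with a nonzero coefficient is of this form, with `X_j = {e : d(e) = j}`
and `B = X_p`.
-/

open scoped Classical
open Matroid

/-- `fkZ M z` is the polynomial `Σ_{I independent in M, |I| = z} Π_{e ∈ I} x_e`
in `ℝ[x_e : e ∈ E]` (zero when `z < 0`), for a matroid `M` on the whole finite type. -/
noncomputable def fkZ {α : Type*} [Fintype α] (M : Matroid α) (z : ℤ) : MvPolynomial α ℝ :=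
  ∑ I ∈ Finset.univ.filter (fun I : Finset α => M.Indep ↑I ∧ (I.card : ℤ) = z),
    ∏ e ∈ I, MvPolynomial.X e

/-- `piTuple N i` is the number of ordered partitions `(A_1, …, A_p)` of the ground set
of `N` into pairwise disjoint sets, each independent with `|A_s| = i s`. -/
noncomputable def piTuple {β : Type*} (N : Matroid β) {p : ℕ} (i : Fin p → ℤ) : ℕ :=
  {A : Fin p → Set β | (⋃ s, A s) = N.E ∧ Pairwise (Function.onFun Disjoint A) ∧
    ∀ s, N.Indep (A s) ∧ ((A s).ncard : ℤ) = i s}.ncard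

/-- Contraction of the set `C` from `M`, defined via duality: `M/C = (M✶ \ C)✶`. -/
noncomputable def mcontract {α : Type*} (M : Matroid α) (C : Set α) : Matroid α :=
  (M✶ ↾ (M.E \ C))✶

/-- The rank of the set `Y` in the matroid `M`: the maximal size of an independent
subset of `Y`. -/
noncomputable def rkIn {α : Type*} (M : Matroid α) (Y : Set α) : ℕ :=
  sSup {n : ℕ | ∃ I, M.Indep I ∧ I ⊆ Y ∧ I.ncard = n}

/-- The ground set obtained from pairwise disjoint `X_1, …, X_p` by replacing every
element of `X_j` by `q_j = j` parallel copies for `1 ≤ j ≤ p - 1`, and keeping the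
elements of `X_p` (indexed `⟨p-1⟩`) as they are: copies of `x` are the pairs `(x, i)`. -/
def replGround {α : Type*} {p : ℕ} (X : Fin p → Set α) : Set (α × ℕ) :=
  {z | ∃ j : Fin p, z.1 ∈ X j ∧ z.2 < (if (j : ℕ) = p - 1 then 1 else (j : ℕ) + 1)}

/-- The matroid `M[𝐗, 𝐪]` with `𝐪 = (1, 2, …, p-1)`: restrict `M` to `X_1 ∪ ⋯ ∪ X_p`,
replace each element of `X_j` by `j` parallel copies (for `j ≤ p - 1`) via a comap along
the projection collapsing copies, and finally contract (the copy of) `X_p`. -/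
noncomputable def matroidXq {α : Type*} (M : Matroid α) {p : ℕ} (X : Fin p → Set α)
    (hp : 0 < p) : Matroid (α × ℕ) :=
  mcontract (((M ↾ (⋃ j, X j)).comap Prod.fst) ↾ replGround X)
    ((X ⟨p - 1, Nat.sub_lt hp one_pos⟩) ×ˢ ({0} : Set ℕ))

open Function

lemma rkIn_eq_card_of_isBasis {α : Type*} {M : Matroid α} {Y : Set α} {B : Finset α}
    (hB : M.IsBasis ↑B Y) : rkIn M Y = B.card := by
  refine IsGreatest.csSup_eq ⟨⟨B, hB.indep, hB.subset, Set.ncard_coe_finset B⟩, ?_⟩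
  rintro n ⟨I, hI, hIY, rfl⟩
  obtain ⟨B', hB', hIB'⟩ := hI.subset_isBasis_of_subset hIY hB.subset_ground
  have hle : I.encard ≤ B.card := by
    rw [← Set.encard_coe_eq_coe_finsetCard, ← hB'.encard_eq_encard hB]
    exact Set.encard_le_encard hIB'
  have hIfin : I.Finite := Set.finite_of_encard_le_coe hle
  exact_mod_cast hIfin.cast_ncard_eq ▸ hle

section CopyMatroid

open Set

variable {α : Type*} {p : ℕ}

/-- Blocks are 0-based: an element of `X j`, `j < p - 1`, has `j + 1` copies in `M[𝐗, 𝐪]`,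
while the last block is contracted. -/
noncomputable def numCopies (X : Fin p → Set α) (e : α) : ℕ :=
  ∑ j : Fin p, if e ∈ X j ∧ (j : ℕ) ≠ p - 1 then (j : ℕ) + 1 else 0

def copySet (c : α → ℕ) : Set (α × ℕ) := {z | z.2 < c z.1}

variable {X : Fin p → Set α}

lemma numCopies_eq_of_mem (hdj : Pairwise (Disjoint on X)) {e : α} {j : Fin p} (he : e ∈ X j)
    (hj : (j : ℕ) ≠ p - 1) : numCopies X e = (j : ℕ) + 1 := by
  rw [numCopies, Finset.sum_eq_single j (fun j' _ hne => if_neg fun h => hne ?_) (by simp)]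
  · simp [he, hj]
  · by_contra hne'
    exact disjoint_left.mp (hdj hne') h.1 he

lemma exists_mem_of_numCopies_pos {e : α} (h : 0 < numCopies X e) :
    ∃ j : Fin p, e ∈ X j ∧ (j : ℕ) ≠ p - 1 := by
  obtain ⟨j, -, hj⟩ := Finset.exists_ne_zero_of_sum_ne_zero h.ne'
  exact ⟨j, of_not_not fun h' => hj (if_neg h')⟩

lemma exists_of_mem_copySet (hdj : Pairwise (Disjoint on X)) {z : α × ℕ}
    (hz : z ∈ copySet (numCopies X)) :
    ∃ j : Fin p, z.1 ∈ X j ∧ (j : ℕ) ≠ p - 1 ∧ z.2 < (j : ℕ) + 1 := by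
  obtain ⟨j, hj, hne⟩ := exists_mem_of_numCopies_pos (Nat.zero_lt_of_lt hz)
  exact ⟨j, hj, hne, numCopies_eq_of_mem hdj hj hne ▸ hz⟩

variable (hp : 0 < p)

lemma fst_notMem_last_of_mem_copySet (hdj : Pairwise (Disjoint on X)) {z : α × ℕ}
    (hz : z ∈ copySet (numCopies X)) : z.1 ∉ X ⟨p - 1, Nat.sub_lt hp one_pos⟩ := fun hlast => by
  obtain ⟨j, hj, hne, -⟩ := exists_of_mem_copySet hdj hz
  by_cases hj' : j = ⟨p - 1, Nat.sub_lt hp one_pos⟩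
  · exact hne (by rw [hj'])
  · exact disjoint_left.mp (hdj hj') hj hlast

lemma replGround_diff_last (hdj : Pairwise (Disjoint on X)) :
    replGround X \ X ⟨p - 1, Nat.sub_lt hp one_pos⟩ ×ˢ {0} = copySet (numCopies X) := by
  ext ⟨e, i⟩
  constructor
  · rintro ⟨⟨j, hej, hi⟩, hlast⟩
    by_cases hj : (j : ℕ) = p - 1
    · rw [if_pos hj] at hi
      obtain rfl : j = ⟨p - 1, Nat.sub_lt hp one_pos⟩ := Fin.ext hj
      exact absurd ⟨hej, Nat.lt_one_iff.mp hi⟩ hlast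
    · rw [if_neg hj] at hi
      show i < numCopies X e
      rwa [numCopies_eq_of_mem hdj hej hj]
  · intro hz
    obtain ⟨j, hej, hne, hlt⟩ := exists_of_mem_copySet hdj hz
    exact ⟨⟨j, hej, by rwa [if_neg hne]⟩, fun h => fst_notMem_last_of_mem_copySet hp hdj hz h.1⟩

lemma matroidXq_ground (M : Matroid α) (hdj : Pairwise (Disjoint on X)) :
    (matroidXq M X hp).E = copySet (numCopies X) :=
  replGround_diff_last hp hdj

lemma ncard_copySet [Fintype α] (c : α → ℕ) : (copySet c).ncard = ∑ e, c e := by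
  have e : copySet c ≃ Σ e, Fin (c e) :=
    { toFun := fun z => ⟨z.1.1, z.1.2, z.2⟩
      invFun := fun z => ⟨(z.1, z.2), z.2.isLt⟩
      left_inv := fun _ => rfl
      right_inv := fun _ => rfl }
  simp [← Nat.card_coe_set_eq, Nat.card_congr e]

lemma injOn_fst_prod_singleton (Y : Set α) (i : ℕ) : InjOn Prod.fst (Y ×ˢ {i}) := by
  rintro ⟨a, b⟩ ⟨-, rfl⟩ ⟨c, d⟩ ⟨-, rfl⟩ h
  simp_all

lemma matroidXq_indep_iff {M : Matroid α} (hdj : Pairwise (Disjoint on X)) {B : Set α}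
    (hB : M.IsBasis B (X ⟨p - 1, Nat.sub_lt hp one_pos⟩)) {A : Set (α × ℕ)} :
    (matroidXq M X hp).Indep A ↔
      A ⊆ copySet (numCopies X) ∧ InjOn Prod.fst A ∧ M.Indep (Prod.fst '' A ∪ B) := by
  set last : Fin p := ⟨p - 1, Nat.sub_lt hp one_pos⟩
  have hlastU : X last ⊆ ⋃ j, X j := subset_iUnion X last
  have hlastG : X last ×ˢ {0} ⊆ replGround X := by
    rintro ⟨e, i⟩ ⟨he, rfl⟩
    exact ⟨last, he, by simp [last]⟩
  have hfst (Y : Set α) : Prod.fst '' (Y ×ˢ ({0} : Set ℕ)) = Y :=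
    fst_image_prod _ (singleton_nonempty 0)
  have hbasis : ((M ↾ ⋃ j, X j).comap Prod.fst ↾ replGround X).IsBasis (B ×ˢ {0})
      (X last ×ˢ {0}) := by
    rw [isBasis_restrict_iff', comap_ground_eq, restrict_ground_eq,
      inter_eq_left.mpr (show X last ×ˢ {0} ⊆ Prod.fst ⁻¹' ⋃ j, X j from
        fun z hz => hlastU hz.1), comap_isBasis_iff, hfst, hfst,
      isBasis_restrict_iff', inter_eq_left.mpr hB.subset_ground]
    exact ⟨⟨⟨hB, hlastU⟩, injOn_fst_prod_singleton B 0, prod_mono hB.subset subset_rfl⟩, hlastG⟩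
  change (_ ／ _).Indep A ↔ _
  rw [hbasis.contract_indep_iff, restrict_indep_iff, comap_indep_iff, restrict_indep_iff,
    image_union, hfst]
  constructor
  · rintro ⟨⟨⟨⟨hI, -⟩, hinj⟩, hG⟩, hdisj⟩
    refine ⟨?_, hinj.mono subset_union_left, hI⟩
    rw [← replGround_diff_last hp hdj]
    exact subset_sdiff.mpr ⟨subset_union_left.trans hG, hdisj.symm⟩
  · rintro ⟨hA, hinj, hI⟩
    have hlast : ∀ z ∈ A, z.1 ∉ X last := fun z hz =>
      fst_notMem_last_of_mem_copySet hp hdj (hA hz)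
    have hU : Prod.fst '' A ⊆ ⋃ j, X j := by
      rintro _ ⟨z, hz, rfl⟩
      obtain ⟨j, hj, -⟩ := exists_of_mem_copySet hdj (hA hz)
      exact mem_iUnion_of_mem j hj
    have hAG : A ⊆ replGround X := hA.trans (replGround_diff_last hp hdj ▸ sdiff_subset)
    have hBlast : B ×ˢ {0} ⊆ X last ×ˢ {0} := prod_mono hB.subset subset_rfl
    refine ⟨⟨⟨⟨hI, union_subset hU (hB.subset.trans hlastU)⟩, ?_⟩,
      union_subset hAG (hBlast.trans hlastG)⟩,
      disjoint_right.mpr fun z hz hz' => hlast z hz hz'.1⟩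
    rw [injOn_union (disjoint_right.mpr fun z hz hz' => hlast z hz' (hB.subset hz.1))]
    exact ⟨hinj, injOn_fst_prod_singleton B 0,
      fun x hx y hy h => hlast x hx (h ▸ hB.subset hy.1)⟩

end CopyMatroid

section Colorings

open Set

variable {α : Type*} {p : ℕ} {c : α → ℕ}

def colorClass (τ : ∀ e, Fin (c e) → Fin p) (j : Fin p) : Set (α × ℕ) :=
  {z | ∃ h : z.2 < c z.1, τ z.1 ⟨z.2, h⟩ = j}

lemma mk_mem_colorClass (τ : ∀ e, Fin (c e) → Fin p) (e : α) (i : Fin (c e)) :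
    ((e, i) : α × ℕ) ∈ colorClass τ (τ e i) :=
  ⟨i.isLt, rfl⟩

lemma iUnion_colorClass (τ : ∀ e, Fin (c e) → Fin p) : ⋃ j, colorClass τ j = copySet c :=
  Subset.antisymm (iUnion_subset fun _ _ hz => hz.1) fun _ hz => mem_iUnion.mpr ⟨_, hz, rfl⟩

lemma pairwise_disjoint_colorClass (τ : ∀ e, Fin (c e) → Fin p) :
    Pairwise (Disjoint on colorClass τ) := fun _ _ hne =>
  disjoint_left.mpr fun _ ⟨_, h⟩ ⟨_, h'⟩ => hne (h.symm.trans h')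

noncomputable def colorClassEquiv :
    (∀ e, Fin (c e) → Fin p) ≃
      {A : Fin p → Set (α × ℕ) // ⋃ j, A j = copySet c ∧ Pairwise (Disjoint on A)} := by
  refine Equiv.ofBijective
    (fun τ => ⟨colorClass τ, iUnion_colorClass τ, pairwise_disjoint_colorClass τ⟩) ⟨?_, ?_⟩
  · intro τ τ' h
    funext e i
    have hmem := mk_mem_colorClass τ e i
    rw [show colorClass τ = colorClass τ' from congrArg Subtype.val h] at hmem
    exact hmem.2.symm
  · rintro ⟨A, hU, hdisj⟩
    have hcov (e : α) (i : Fin (c e)) : ∃ j, ((e, i) : α × ℕ) ∈ A j :=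
      mem_iUnion.mp (hU ▸ i.isLt)
    choose τ hτ using hcov
    refine ⟨τ, Subtype.ext (funext fun j => Set.ext fun ⟨e, i⟩ => ⟨?_, fun hz => ?_⟩)⟩
    · rintro ⟨h, rfl⟩
      exact hτ e ⟨i, h⟩
    · have h : ((e, i) : α × ℕ) ∈ copySet c := hU ▸ mem_iUnion_of_mem j hz
      exact ⟨h, by_contra fun hne => disjoint_left.mp (hdisj hne) (hτ e ⟨i, h⟩) hz⟩

lemma piTuple_eq_card_colorings (N : Matroid (α × ℕ)) (hN : N.E = copySet c)
    (s : Fin p → ℤ) :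
    piTuple N s = Nat.card {τ : ∀ e, Fin (c e) → Fin p //
      ∀ j, N.Indep (colorClass τ j) ∧ ((colorClass τ j).ncard : ℤ) = s j} := by
  rw [piTuple, ← Nat.card_coe_set_eq]
  symm
  let R (A : Fin p → Set (α × ℕ)) : Prop := ∀ j, N.Indep (A j) ∧ ((A j).ncard : ℤ) = s j
  exact Nat.card_congr <|
    (Equiv.subtypeEquiv (q := fun A => R A.1) colorClassEquiv fun _ => Iff.rfl).trans <|
    (Equiv.subtypeSubtypeEquivSubtypeInter _ R).trans <|
    Equiv.subtypeEquivRight fun A => by rw [hN, and_assoc]; rfl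

end Colorings

section ImageFamilies

open Finset
open scoped Nat

variable {α : Type*} [Fintype α] {p : ℕ}

lemma card_injective_with_image {n : ℕ} (T : Finset (Fin p)) (hT : #T = n) :
    Nat.card {g : Fin n → Fin p // Injective g ∧ univ.image g = T} = n ! := by
  have e : {g : Fin n → Fin p // Injective g ∧ univ.image g = T} ≃ (Fin n ↪ T) :=
    { toFun g := ⟨fun i => ⟨g.1 i, g.2.2.subset (mem_image_of_mem _ (mem_univ i))⟩,
        fun _ _ h => g.2.1 (congrArg Subtype.val h)⟩
      invFun F := ⟨Subtype.val ∘ F, Subtype.val_injective.comp F.injective,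
        eq_of_subset_of_card_le (image_subset_iff.mpr fun i _ => (F i).2) <| by
          rw [card_image_of_injective _ (Subtype.val_injective.comp F.injective), card_univ,
            Fintype.card_fin, hT]⟩
      left_inv _ := rfl
      right_inv _ := rfl }
  rw [Nat.card_congr e, Nat.card_eq_fintype_card, Fintype.card_embedding_eq, Fintype.card_fin,
    Fintype.card_coe, hT, Nat.descFactorial_self]

lemma card_injective_colorings (c : α → ℕ) (Q : (α → Finset (Fin p)) → Prop) :
    Nat.card {τ : ∀ e, Fin (c e) → Fin p //
        (∀ e, Injective (τ e)) ∧ Q fun e => univ.image (τ e)} =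
      Nat.card {S : α → Finset (Fin p) // (∀ e, #(S e) = c e) ∧ Q S} * ∏ e, (c e)! := by
  let F : {τ : ∀ e, Fin (c e) → Fin p // (∀ e, Injective (τ e)) ∧ Q fun e => univ.image (τ e)} →
      {S : α → Finset (Fin p) // (∀ e, #(S e) = c e) ∧ Q S} := fun τ =>
    ⟨fun e => univ.image (τ.1 e), fun e => by
      rw [card_image_of_injective _ (τ.2.1 e), card_univ, Fintype.card_fin], τ.2.2⟩
  have hfiber (S : {S : α → Finset (Fin p) // (∀ e, #(S e) = c e) ∧ Q S}) :
      {τ // F τ = S} ≃ ∀ e, {g : Fin (c e) → Fin p // Injective g ∧ univ.image g = S.1 e} :=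
    { toFun τ e := ⟨τ.1.1 e, τ.1.2.1 e, congrFun (congrArg Subtype.val τ.2) e⟩
      invFun G := ⟨⟨fun e => (G e).1, fun e => (G e).2.1, by
          rw [show (fun e => univ.image (G e).1) = S.1 from funext fun e => (G e).2.2]
          exact S.2.2⟩,
        Subtype.ext (funext fun e => (G e).2.2)⟩
      left_inv _ := rfl
      right_inv _ := rfl }
  rw [Nat.card_congr (Equiv.sigmaFiberEquiv F).symm, Nat.card_sigma]
  calc ∑ S, Nat.card {τ // F τ = S} = ∑ _S, ∏ e, (c e)! :=
        sum_congr rfl fun S _ => by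
          rw [Nat.card_congr (hfiber S), Nat.card_pi]
          exact prod_congr rfl fun e _ => card_injective_with_image _ (S.2.1 e)
    _ = _ := by rw [sum_const, card_univ, smul_eq_mul, Nat.card_eq_fintype_card]

end ImageFamilies

section Tuples

open Finset

variable {α : Type*} [Fintype α] {p : ℕ}

def rowSet (S : α → Finset (Fin p)) (j : Fin p) : Finset α := univ.filter fun e => j ∈ S e

@[simp] lemma mem_rowSet {S : α → Finset (Fin p)} {j : Fin p} {e : α} :
    e ∈ rowSet S j ↔ j ∈ S e := by
  simp [rowSet]

noncomputable def indepTuples (M : Matroid α) (s : Fin p → ℤ) (d : α → ℕ) :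
    Finset (Fin p → Finset α) :=
  univ.filter fun I => (∀ j, M.Indep ↑(I j) ∧ (#(I j) : ℤ) = s j) ∧
    ∀ e, #(univ.filter fun j => e ∈ I j) = d e

lemma mem_all_of_mem_indepTuples {M : Matroid α} {s : Fin p → ℤ} {d : α → ℕ}
    {I : Fin p → Finset α} (hI : I ∈ indepTuples M s d) {e : α} (he : d e = p) (j : Fin p) :
    e ∈ I j := by
  have hall : univ.filter (fun j => e ∈ I j) = univ :=
    eq_univ_of_card _ (by rw [(mem_filter.mp hI).2.2 e, he, Fintype.card_fin])
  have hj := mem_univ j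
  rw [← hall] at hj
  exact (mem_filter.mp hj).2

lemma rowSet_union_eq_of_mem_indepTuples {M : Matroid α} {s : Fin p → ℤ} {d : α → ℕ}
    {I : Fin p → Finset α} (hI : I ∈ indepTuples M s d) {B : Finset α} (hB : ∀ e ∈ B, d e = p)
    (j : Fin p) :
    rowSet (fun e => if e ∈ B then ∅ else univ.filter fun j => e ∈ I j) j ∪ B = I j := by
  ext e
  by_cases he : e ∈ B
  · simpa [he] using mem_all_of_mem_indepTuples hI (hB e he) j
  · simp [he]

lemma card_families_eq_card_indepTuples (M : Matroid α) (s : Fin p → ℤ) (c : α → ℕ)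
    {B : Finset α} (hcB : ∀ e ∈ B, c e = 0) :
    Nat.card {S : α → Finset (Fin p) // (∀ e, #(S e) = c e) ∧
        ∀ j, M.Indep ↑(rowSet S j ∪ B) ∧ ((#(rowSet S j) + #B : ℕ) : ℤ) = s j} =
      #(indepTuples M s fun e => c e + if e ∈ B then p else 0) := by
  have hempty {S : α → Finset (Fin p)} (hS : ∀ e, #(S e) = c e) {e : α} (he : e ∈ B) :
      S e = ∅ := card_eq_zero.mp ((hS e).trans (hcB e he))
  have hdisj {S : α → Finset (Fin p)} (hS : ∀ e, #(S e) = c e) (j : Fin p) :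
      Disjoint (rowSet S j) B :=
    disjoint_left.mpr fun e hj he => by simp [hempty hS he] at hj
  have hBp : ∀ e ∈ B, c e + (if e ∈ B then p else 0) = p := fun e he => by simp [he, hcB e he]
  rw [← Nat.card_eq_finsetCard (indepTuples M s _)]
  refine Nat.card_congr
    { toFun := fun S => ⟨fun j => rowSet S.1 j ∪ B, ?_⟩
      invFun := fun I => ⟨fun e => if e ∈ B then ∅ else univ.filter fun j => e ∈ I.1 j, ?_⟩
      left_inv := fun S => ?_
      right_inv := fun I => ?_ }
  · simp only [indepTuples, mem_filter, mem_univ, true_and]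
    refine ⟨fun j => ⟨(S.2.2 j).1, ?_⟩, fun e => ?_⟩
    · rw [card_union_of_disjoint (hdisj S.2.1 j)]
      exact (S.2.2 j).2
    · by_cases he : e ∈ B
      · simp [he, hcB e he]
      · simp [he, ← S.2.1 e]
  · have hmult := (mem_filter.mp I.2).2
    have hS (e : α) : #(if e ∈ B then ∅ else univ.filter fun j => e ∈ I.1 j) = c e := by
      by_cases he : e ∈ B
      · simp [he, hcB e he]
      · simpa [he] using hmult.2 e
    refine ⟨hS, fun j => ?_⟩
    rw [← card_union_of_disjoint (hdisj hS j), rowSet_union_eq_of_mem_indepTuples I.2 hBp j]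
    exact hmult.1 j
  · refine Subtype.ext (funext fun e => ?_)
    by_cases he : e ∈ B
    · simp [he, hempty S.2.1 he]
    · ext j
      simp [he]
  · exact Subtype.ext (funext (rowSet_union_eq_of_mem_indepTuples I.2 hBp))

end Tuples

section Coefficients

open Finset MvPolynomial

variable {α : Type*} {p : ℕ}

lemma prod_X_eq_monomial (I : Fin p → Finset α) :
    ∏ j, ∏ e ∈ I j, (X e : MvPolynomial α ℝ) =
      monomial (∑ j, ∑ e ∈ I j, Finsupp.single e 1) 1 := by
  simp_rw [monomial_sum_one]
  rfl

lemma coeff_prod_fkZ [Fintype α] (M : Matroid α) (s : Fin p → ℤ) (d : α →₀ ℕ) :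
    coeff d (∏ j, fkZ M (s j)) = #(indepTuples M s d) := by
  simp_rw [fkZ, prod_univ_sum, prod_X_eq_monomial, coeff_sum, coeff_monomial, sum_boole]
  congr 2
  ext I
  simp [indepTuples, Fintype.mem_piFinset, Finsupp.ext_iff, Finsupp.finsetSum_apply,
    Finsupp.single_apply, eq_comm]

end Coefficients

section Counting

open Finset
open scoped Nat

variable {α : Type*} {p : ℕ}

lemma fst_image_colorClass [Fintype α] {c : α → ℕ} (τ : ∀ e, Fin (c e) → Fin p) (j : Fin p) :
    Prod.fst '' colorClass τ j = ↑(rowSet (fun e => univ.image (τ e)) j) := by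
  ext e
  simp only [Set.mem_image, mem_coe, mem_rowSet, mem_image, mem_univ, true_and]
  constructor
  · rintro ⟨⟨e, i⟩, ⟨h, hj⟩, rfl⟩
    exact ⟨⟨i, h⟩, hj⟩
  · rintro ⟨i, rfl⟩
    exact ⟨(e, i), mk_mem_colorClass τ e i, rfl⟩

lemma injOn_fst_colorClass_iff {c : α → ℕ} (τ : ∀ e, Fin (c e) → Fin p) :
    (∀ j, Set.InjOn Prod.fst (colorClass τ j)) ↔ ∀ e, Injective (τ e) := by
  constructor
  · intro h e i i' hii'
    have hmem : ((e, i') : α × ℕ) ∈ colorClass τ (τ e i) := hii' ▸ mk_mem_colorClass τ e i'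
    exact Fin.ext (congrArg Prod.snd (h _ (mk_mem_colorClass τ e i) hmem rfl))
  · rintro h j ⟨e, i⟩ ⟨hi, hj⟩ ⟨e', i'⟩ ⟨hi', hj'⟩ (rfl : e = e')
    have := h e (hj.trans hj'.symm)
    simp_all

noncomputable def exponentOf (X : Fin p → Set α) (B : Finset α) : α → ℕ :=
  fun e => numCopies X e + if e ∈ B then p else 0

variable [Fintype α] {X : Fin p → Set α}

theorem piTuple_matroidXq (hp : 0 < p) {M : Matroid α} (hdj : Pairwise (Disjoint on X))
    {B : Finset α} (hB : M.IsBasis ↑B (X ⟨p - 1, Nat.sub_lt hp one_pos⟩)) {k l : ℕ}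
    (hkl : #B + k = l) (c : Fin p → ℤ) :
    piTuple (matroidXq M X hp) (fun j => k + c j) =
      #(indepTuples M (fun j => l + c j) (exponentOf X B)) * ∏ e, (numCopies X e)! := by
  have hcB (e : α) (he : e ∈ B) : numCopies X e = 0 := by
    by_contra h
    exact fst_notMem_last_of_mem_copySet hp hdj (z := (e, 0)) (Nat.pos_of_ne_zero h)
      (hB.subset he)
  unfold exponentOf
  rw [piTuple_eq_card_colorings _ (matroidXq_ground hp M hdj),
    ← card_families_eq_card_indepTuples M _ _ hcB, ← card_injective_colorings]
  refine Nat.card_congr (Equiv.subtypeEquivRight fun τ => ?_)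
  have hcard (j : Fin p) (hinj : Set.InjOn Prod.fst (colorClass τ j)) :
      (colorClass τ j).ncard = #(rowSet (fun e => univ.image (τ e)) j) := by
    rw [← hinj.ncard_image, fst_image_colorClass, Set.ncard_coe_finset]
  simp only [matroidXq_indep_iff hp hdj hB, fst_image_colorClass, coe_union,
    ← injOn_fst_colorClass_iff]
  constructor
  · intro h
    refine ⟨fun j => (h j).1.2.1, fun j => ⟨(h j).1.2.2, ?_⟩⟩
    have := (h j).2
    rw [hcard j (h j).1.2.1] at this
    push_cast
    omega
  · rintro ⟨hinj, h⟩ j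
    refine ⟨⟨fun _ hz => hz.1, hinj j, (h j).1⟩, ?_⟩
    have := (h j).2
    rw [hcard j (hinj j)]
    push_cast at this
    omega

end Counting

section LevelSets

open Finset

variable {α : Type*} {p : ℕ}

lemma sum_exponentOf [Fintype α] (X : Fin p → Set α) (B : Finset α) :
    ∑ e, exponentOf X B e = ∑ e, numCopies X e + p * #B := by
  simp [exponentOf, sum_add_distrib, sum_ite_mem, mul_comm]

def levelSets (d : α → ℕ) (j : Fin p) : Set α := {e | d e = j + 1}

lemma pairwise_disjoint_levelSets (d : α → ℕ) : Pairwise (Disjoint on levelSets (p := p) d) :=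
  fun _ _ hne => Set.disjoint_left.mpr fun _ h h' => hne (Fin.ext (by simp_all [levelSets]))

variable [Fintype α] {M : Matroid α} {s : Fin p → ℤ} {d : α → ℕ} {I : Fin p → Finset α}

lemma exponent_le_of_mem_indepTuples (hI : I ∈ indepTuples M s d) (e : α) : d e ≤ p := by
  rw [← (mem_filter.mp hI).2.2 e]
  exact (card_filter_le _ _).trans (by simp)

lemma sum_eq_sum_of_mem_indepTuples (hI : I ∈ indepTuples M s d) :
    ((∑ e, d e : ℕ) : ℤ) = ∑ j, s j := by
  obtain ⟨-, hsize, hmult⟩ := mem_filter.mp hI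
  calc ((∑ e, d e : ℕ) : ℤ) = ((∑ j, #(I j) : ℕ) : ℤ) := by
        simp_rw [← hmult, card_eq_sum_ones, sum_filter]
        rw [sum_comm]
        simp
    _ = ∑ j, s j := by push_cast; exact sum_congr rfl fun j _ => (hsize j).2

lemma levelSets_subset_ground (hI : I ∈ indepTuples M s d) (j : Fin p) :
    levelSets d j ⊆ M.E := by
  intro e he
  obtain ⟨j', hj'⟩ : (univ.filter fun j => e ∈ I j).Nonempty := by
    rw [← card_pos, (mem_filter.mp hI).2.2 e, show d e = j + 1 from he]
    exact Nat.succ_pos _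
  exact ((mem_filter.mp hI).2.1 j').1.subset_ground (mem_filter.mp hj').2

lemma isBasis_last_levelSets (hp : 0 < p) (hI : I ∈ indepTuples M s d) :
    M.IsBasis ↑(univ.filter fun e => d e = p) (levelSets d ⟨p - 1, Nat.sub_lt hp one_pos⟩) := by
  have hlast : levelSets d ⟨p - 1, Nat.sub_lt hp one_pos⟩ = ↑(univ.filter fun e => d e = p) := by
    ext e
    simp only [levelSets, Set.mem_ofPred_eq, coe_filter, mem_univ, true_and]
    omega
  rw [hlast]
  refine Matroid.Indep.isBasis_self (((mem_filter.mp hI).2.1 ⟨0, hp⟩).1.subset fun e he => ?_)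
  exact mem_all_of_mem_indepTuples hI (mem_filter.mp he).2 _

lemma exponentOf_levelSets (hd : ∀ e, d e ≤ p) :
    exponentOf (levelSets (p := p) d) (univ.filter fun e => d e = p) = d := by
  funext e
  by_cases h : 0 < d e ∧ d e < p
  · have hmem : e ∈ levelSets d (⟨d e - 1, by omega⟩ : Fin p) := by
      simp only [levelSets, Set.mem_ofPred_eq]
      omega
    rw [exponentOf, numCopies_eq_of_mem (pairwise_disjoint_levelSets d) hmem
      (show d e - 1 ≠ p - 1 by omega)]
    simp only [mem_filter, mem_univ, true_and, if_neg h.2.ne]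
    omega
  · have hzero : numCopies (levelSets (p := p) d) e = 0 := by
      refine sum_eq_zero fun j _ => if_neg ?_
      rintro ⟨hj, hne⟩
      simp only [levelSets, Set.mem_ofPred_eq] at hj
      have := hd e
      omega
    simp only [exponentOf, hzero, mem_filter, mem_univ, true_and, zero_add]
    have := hd e
    split_ifs <;> omega

lemma exists_add_eq_of_mem_indepTuples (hp : 0 < p) {l : ℕ} {m : Fin p → ℤ}
    (hm : ∑ j, m j = 0) (hI : I ∈ indepTuples M (fun j => l + m j) d) :
    ∃ k, #(univ.filter fun e => d e = p) + k = l ∧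
      ∑ e, numCopies (levelSets (p := p) d) e = p * k := by
  set B := univ.filter fun e => d e = p
  have hsum := sum_eq_sum_of_mem_indepTuples hI
  rw [← exponentOf_levelSets (exponent_le_of_mem_indepTuples hI), sum_exponentOf,
    sum_add_distrib, hm] at hsum
  simp only [sum_const, card_univ, Fintype.card_fin, nsmul_eq_mul, add_zero] at hsum
  have hsum' : ∑ e, numCopies (levelSets (p := p) d) e + p * #B = p * l := by
    exact_mod_cast hsum
  have hBl : #B ≤ l := Nat.le_of_mul_le_mul_left (by omega) hp
  refine ⟨l - #B, Nat.add_sub_of_le hBl, ?_⟩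
  rw [Nat.mul_sub, ← hsum']
  omega

end LevelSets

/-- For a matroid `M` on a finite ground set, `p ≥ 2`, `l ≥ 1`, and integer tuples
`(n_1, …, n_p)`, `(m_1, …, m_p)` each summing to `0`, the coefficientwise inequality
`f_{l+n_1}(M) ⋯ f_{l+n_p}(M) ≥ f_{l+m_1}(M) ⋯ f_{l+m_p}(M)` holds if and only if for
every `k ≤ l` and every matroid `N = M[𝐗, 𝐪]` (with `𝐪 = (1, …, p-1)`) of size `pk`
and depth `l - k`, one has `π_{(k+n_1, …, k+n_p)}(N) ≥ π_{(k+m_1, …, k+m_p)}(N)`. -/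
theorem fk_prod_ge_iff_piTuple {α : Type*} [Fintype α] (M : Matroid α)
    (p l : ℕ) (hp : 2 ≤ p)
    (n m : Fin p → ℤ) (hm : ∑ j, m j = 0) :
    (∀ d : α →₀ ℕ,
        MvPolynomial.coeff d (∏ j, fkZ M ((l : ℤ) + m j)) ≤
          MvPolynomial.coeff d (∏ j, fkZ M ((l : ℤ) + n j))) ↔
      (∀ k : ℕ, k ≤ l → ∀ X : Fin p → Set α, (∀ j, X j ⊆ M.E) →
        Pairwise (Function.onFun Disjoint X) →
        (matroidXq M X (by omega)).E.ncard = p * k →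
        rkIn M (X ⟨p - 1, by omega⟩) = l - k →
        piTuple (matroidXq M X (by omega)) (fun j => (k : ℤ) + m j) ≤
          piTuple (matroidXq M X (by omega)) (fun j => (k : ℤ) + n j)) := by
  have hp0 : 0 < p := by omega
  constructor
  · intro hcoeff k _ X hXE hdj _ hrk
    obtain ⟨B, hB⟩ := M.exists_isBasis _ (hXE ⟨p - 1, Nat.sub_lt hp0 one_pos⟩)
    lift B to Finset α using B.toFinite
    have hBk : B.card + k = l := by
      rw [rkIn_eq_card_of_isBasis hB] at hrk
      omega
    rw [piTuple_matroidXq hp0 hdj hB hBk, piTuple_matroidXq hp0 hdj hB hBk]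
    refine Nat.mul_le_mul_right _ ?_
    have := hcoeff (Finsupp.equivFunOnFinite.symm (exponentOf X B))
    rwa [coeff_prod_fkZ, coeff_prod_fkZ, Finsupp.coe_equivFunOnFinite_symm, Nat.cast_le] at this
  · intro hpi d
    rw [coeff_prod_fkZ, coeff_prod_fkZ, Nat.cast_le]
    obtain hempty | ⟨I, hI⟩ := (indepTuples M (fun j => l + m j) d).eq_empty_or_nonempty
    · simp [hempty]
    have hdj := pairwise_disjoint_levelSets (p := p) d
    have hB := isBasis_last_levelSets hp0 hI
    obtain ⟨k, hk, hsize⟩ := exists_add_eq_of_mem_indepTuples hp0 hm hI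
    have hle := hpi k (by omega) _ (levelSets_subset_ground hI) hdj
      (by rw [matroidXq_ground hp0 M hdj, ncard_copySet, hsize])
      (by rw [rkIn_eq_card_of_isBasis hB]; omega)
    rw [piTuple_matroidXq hp0 hdj hB hk, piTuple_matroidXq hp0 hdj hB hk,
      exponentOf_levelSets (exponent_le_of_mem_indepTuples hI)] at hle
    exact Nat.le_of_mul_le_mul_right hle (Finset.prod_pos fun e _ => Nat.factorial_pos _)
end

section
/- Let M be a matroid on a finite ground set E and let l be a positive integer. The coefficientwise inequality f_l(M)^2 ≥ (1 + 1/l) f_{l−1}(M) f_{l+1}(M) holds if and only if for every integer k ≤ l and every pair of disjoint subsets X, Y ⊆ E such that |X| = 2k and the rank of Y in M equals l − k, the minor N = M(X ∪ Y)/Y (the restriction of M to X ∪ Y followed by contraction of Y) satisfies π_{k,k}(N) ≥ (1 + 1/l) π_{k−1,k+1}(N). -/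
open scoped Classical
open Matroid

/-- `fk M k` is the polynomial `Σ_{I independent in M, |I| = k} Π_{e ∈ I} x_e`
in `ℝ[x_e : e ∈ E]`, for a matroid `M` whose ground set is the whole (finite) type. -/
noncomputable def fk {α : Type*} [Fintype α] (M : Matroid α) (k : ℕ) : MvPolynomial α ℝ :=
  ∑ I ∈ Finset.univ.filter (fun I : Finset α => M.Indep ↑I ∧ I.card = k),
    ∏ e ∈ I, MvPolynomial.X e

/-- `pi2 M i j` is the number of ordered pairs `(A, B)` of disjoint subsets of the
ground set of `M` with `A ∪ B = M.E`, `|A| = i`, `|B| = j`, and both independent. -/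
noncomputable def pi2 {α : Type*} (M : Matroid α) (i j : ℤ) : ℕ :=
  {AB : Set α × Set α | AB.1 ∪ AB.2 = M.E ∧ Disjoint AB.1 AB.2 ∧
    M.Indep AB.1 ∧ M.Indep AB.2 ∧ (AB.1.ncard : ℤ) = i ∧ (AB.2.ncard : ℤ) = j}.ncard

/-!
The coefficient of `x^d` in `f_i f_j` counts pairs `(I, J)` of independent sets of sizes `i` and
`j` with `𝟙_I + 𝟙_J = d`. It vanishes unless `d = 2·𝟙_W + 𝟙_X` with `W`, `X` disjoint, and then
the pairs are exactly those with `I ∩ J = W` and `I ∪ J = W ∪ X`. Writing `I = A ∪ W`,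
`J = B ∪ W` turns them into the ordered partitions `(A, B)` of `X` with `A ∪ W`, `B ∪ W`
independent, i.e. with `A`, `B` independent in `M(X ∪ Y)/Y` for any `Y` having `W` as a basis
(so `r(Y) = |W|`). Hence the coefficient is `π_{i-|W|, j-|W|}(M(X ∪ Y)/Y)`, and with
`k = l - |W|` the coefficient inequalities are exactly the inequalities between the `π`s.
-/

open MvPolynomial Finset

section Coefficients

variable {α : Type*}

noncomputable def sqfreeExp (s : Finset α) : α →₀ ℕ := ∑ e ∈ s, Finsupp.single e 1

lemma sqfreeExp_apply (s : Finset α) (e : α) : sqfreeExp s e = if e ∈ s then 1 else 0 := by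
  simp [sqfreeExp, Finsupp.finsetSum_apply, Finsupp.single_apply]

lemma prod_X_eq_monomial_sqfreeExp {R : Type*} [CommSemiring R] (s : Finset α) :
    ∏ e ∈ s, (X e : MvPolynomial α R) = monomial (sqfreeExp s) 1 := by
  simp [sqfreeExp, monomial_sum_one, X]

lemma sqfreeExp_add_eq_iff {I J W X : Finset α} (hWX : Disjoint W X) :
    sqfreeExp I + sqfreeExp J = 2 • sqfreeExp W + sqfreeExp X ↔ I ∩ J = W ∧ I ∪ J = W ∪ X := by
  simp only [Finsupp.ext_iff, Finset.ext_iff, ← forall_and]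
  refine forall_congr' fun e => ?_
  have : e ∈ W → e ∉ X := fun h => disjoint_left.mp hWX h
  simp only [Finsupp.add_apply, Finsupp.smul_apply, sqfreeExp_apply, mem_inter, mem_union]
  by_cases e ∈ I <;> by_cases e ∈ J <;> by_cases e ∈ W <;> by_cases e ∈ X <;> simp_all

variable [Fintype α]

lemma coeff_fk_mul (M : Matroid α) (i j : ℕ) (d : α →₀ ℕ) :
    coeff d (fk M i * fk M j) =
      #{IJ : Finset α × Finset α | sqfreeExp IJ.1 + sqfreeExp IJ.2 = d ∧
        (M.Indep ↑IJ.1 ∧ #IJ.1 = i) ∧ (M.Indep ↑IJ.2 ∧ #IJ.2 = j)} := by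
  simp only [fk, prod_X_eq_monomial_sqfreeExp, sum_mul_sum, coeff_sum, sum_filter,
    ← sum_product', card_filter]
  push_cast
  refine sum_congr rfl fun IJ _ => ?_
  split_ifs <;> simp_all

lemma exists_eq_of_coeff_fk_mul_ne_zero {M : Matroid α} {i j : ℕ} {d : α →₀ ℕ}
    (hd : coeff d (fk M i * fk M j) ≠ 0) :
    ∃ W X : Finset α, Disjoint W X ∧ M.Indep W ∧ (X : Set α) ⊆ M.E ∧ #W ≤ i ∧
      2 * #W + #X = i + j ∧ d = 2 • sqfreeExp W + sqfreeExp X := by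
  rw [coeff_fk_mul, Nat.cast_ne_zero, Finset.card_ne_zero] at hd
  obtain ⟨⟨I, J⟩, hIJ⟩ := hd
  simp only [Finset.mem_filter, Finset.mem_univ, true_and] at hIJ
  obtain ⟨rfl, ⟨hI, rfl⟩, ⟨hJ, rfl⟩⟩ := hIJ
  have hsub : I ∩ J ⊆ I ∪ J := inter_subset_left.trans subset_union_left
  refine ⟨I ∩ J, (I ∪ J) \ (I ∩ J), disjoint_sdiff, hI.subset (by simp), ?_,
    card_le_card inter_subset_left, ?_, ?_⟩
  · rw [coe_sdiff, coe_union]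
    exact Set.sdiff_subset.trans (Set.union_subset hI.subset_ground hJ.subset_ground)
  · rw [card_sdiff_of_subset hsub, ← card_union_add_card_inter I J]
    have := card_le_card hsub
    omega
  · rw [sqfreeExp_add_eq_iff disjoint_sdiff, union_sdiff_of_subset hsub]
    exact ⟨rfl, rfl⟩

end Coefficients

section PairCounting

variable {α : Type*}

lemma card_filter_finset_pair_eq_ncard [Fintype α] (P : Set α → Set α → Prop)
    [DecidablePred fun IJ : Finset α × Finset α => P IJ.1 IJ.2] :
    #{IJ : Finset α × Finset α | P IJ.1 IJ.2} = {IJ : Set α × Set α | P IJ.1 IJ.2}.ncard := by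
  rw [← Set.ncard_coe_finset]
  exact Set.ncard_congr' ((Fintype.finsetEquivSet.prodCongr Fintype.finsetEquivSet).subtypeEquiv
    fun IJ => by simp)

lemma ncard_pairs_inter_union_eq {W X : Set α} (hWX : Disjoint W X) (P : Set α → Set α → Prop) :
    {IJ : Set α × Set α | (IJ.1 ∩ IJ.2 = W ∧ IJ.1 ∪ IJ.2 = W ∪ X) ∧ P IJ.1 IJ.2}.ncard =
      {AB : Set α × Set α | (AB.1 ∪ AB.2 = X ∧ Disjoint AB.1 AB.2) ∧
        P (AB.1 ∪ W) (AB.2 ∪ W)}.ncard := by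
  have cancel : ∀ C ⊆ X, (C ∪ W) \ W = C := fun C hC =>
    (hWX.mono_right hC).symm.sup_sdiff_cancel_right
  symm
  refine Set.ncard_congr (fun AB _ => (AB.1 ∪ W, AB.2 ∪ W)) ?_ ?_ ?_
  · rintro ⟨A, B⟩ ⟨⟨rfl, hAB⟩, hP⟩
    refine ⟨⟨?_, ?_⟩, hP⟩ <;> dsimp only
    · rw [← Set.inter_union_distrib_right, hAB.inter_eq, Set.empty_union]
    · rw [Set.union_union_union_comm, Set.union_self, Set.union_comm]
  · rintro ⟨A, B⟩ ⟨A', B'⟩ ⟨⟨hX, -⟩, -⟩ ⟨⟨hX', -⟩, -⟩ h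
    dsimp only at hX hX'
    simp only [Prod.mk.injEq] at h ⊢
    subst hX
    constructor
    · rw [← cancel A Set.subset_union_left, h.1, cancel A' (hX' ▸ Set.subset_union_left)]
    · rw [← cancel B Set.subset_union_right, h.2, cancel B' (hX' ▸ Set.subset_union_right)]
  · rintro ⟨I, J⟩ ⟨⟨hIJ, hIJ'⟩, hP⟩
    have hWI : W ⊆ I := hIJ ▸ Set.inter_subset_left
    have hWJ : W ⊆ J := hIJ ▸ Set.inter_subset_right
    refine ⟨(I \ W, J \ W), ⟨⟨?_, ?_⟩, ?_⟩, ?_⟩ <;> dsimp only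
    · rw [← Set.union_sdiff_distrib, hIJ', Set.union_sdiff_cancel_left hWX.inter_eq.subset]
    · exact Set.disjoint_left.mpr fun e hI hJ => hI.2 (hIJ ▸ ⟨hI.1, hJ.1⟩)
    · rwa [Set.sdiff_union_of_subset hWI, Set.sdiff_union_of_subset hWJ]
    · rw [Set.sdiff_union_of_subset hWI, Set.sdiff_union_of_subset hWJ]

end PairCounting

lemma mcontract_eq_contract {α : Type*} (M : Matroid α) (C : Set α) : mcontract M C = M ／ C :=
  rfl

namespace Matroid

variable {α : Type*} {M : Matroid α} {W X Y A : Set α}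

lemma restrict_union_contract_ground (hXY : Disjoint X Y) : ((M ↾ (X ∪ Y)) ／ Y).E = X :=
  hXY.sup_sdiff_cancel_right

lemma IsBasis.restrict_union_contract_indep_iff (hW : M.IsBasis W Y) (hXY : Disjoint X Y)
    (hAX : A ⊆ X) : ((M ↾ (X ∪ Y)) ／ Y).Indep A ↔ M.Indep (A ∪ W) := by
  rw [(hW.isBasis_restrict_of_subset Set.subset_union_right).contract_indep_iff,
    restrict_indep_iff, and_iff_left (Set.union_subset_union hAX hW.subset),
    and_iff_left (hXY.mono_left hAX).symm]

lemma IsBasis.rkIn_eq_ncard (hW : M.IsBasis W Y) (hWfin : W.Finite) : rkIn M Y = W.ncard := by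
  have hmem : W.ncard ∈ {n : ℕ | ∃ I, M.Indep I ∧ I ⊆ Y ∧ I.ncard = n} :=
    ⟨W, hW.indep, hW.subset, rfl⟩
  have hbound : ∀ n ∈ {n : ℕ | ∃ I, M.Indep I ∧ I ⊆ Y ∧ I.ncard = n}, n ≤ W.ncard := by
    rintro n ⟨I, hI, hIY, rfl⟩
    obtain ⟨J, hJ, hIJ⟩ := hI.subset_isBasis_of_subset hIY
    rw [Set.ncard_def, Set.ncard_def, ← hJ.encard_eq_encard hW]
    exact ENat.toNat_le_toNat (Set.encard_le_encard hIJ)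
      (by rw [hJ.encard_eq_encard hW]; exact hWfin.encard_lt_top.ne)
  exact le_antisymm (csSup_le ⟨_, hmem⟩ hbound) (le_csSup ⟨_, hbound⟩ hmem)

end Matroid

lemma coeff_fk_mul_eq_pi2 {α : Type*} [Fintype α] (M : Matroid α) {W X : Finset α} {Y : Set α}
    (hXY : Disjoint (X : Set α) Y) (hW : M.IsBasis W Y) (i j : ℕ) :
    coeff (2 • sqfreeExp W + sqfreeExp X) (fk M i * fk M j) =
      pi2 (mcontract (M ↾ (↑X ∪ Y)) Y) (i - #W) (j - #W) := by
  rw [mcontract_eq_contract]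
  have hWX : Disjoint (W : Set α) X := (hXY.mono_right hW.subset).symm
  have key : ∀ A ⊆ (X : Set α), ∀ n : ℕ, (M.Indep (A ∪ W) ∧ (A ∪ W).ncard = n) ↔
      (((M ↾ (↑X ∪ Y)) ／ Y).Indep A ∧ (A.ncard : ℤ) = n - #W) := fun A hA n => by
    rw [hW.restrict_union_contract_indep_iff hXY hA, Set.ncard_union_eq (hWX.mono_right hA).symm
      ((X : Set α).toFinite.subset hA) W.finite_toSet, Set.ncard_coe_finset]
    exact and_congr_right fun _ => by omega
  have hcoeff : coeff (2 • sqfreeExp W + sqfreeExp X) (fk M i * fk M j) =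
      #{IJ : Finset α × Finset α |
        ((IJ.1 ∩ IJ.2 : Set α) = W ∧ (IJ.1 ∪ IJ.2 : Set α) = (W : Set α) ∪ X) ∧
          (M.Indep IJ.1 ∧ (IJ.1 : Set α).ncard = i) ∧
          (M.Indep IJ.2 ∧ (IJ.2 : Set α).ncard = j)} := by
    simp only [coeff_fk_mul, sqfreeExp_add_eq_iff (Finset.disjoint_coe.mp hWX), ← Finset.coe_inj,
      Finset.coe_inter, Finset.coe_union, Set.ncard_coe_finset]
  rw [hcoeff, card_filter_finset_pair_eq_ncard fun I J => (I ∩ J = W ∧ I ∪ J = (W : Set α) ∪ X) ∧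
      (M.Indep I ∧ I.ncard = i) ∧ (M.Indep J ∧ J.ncard = j),
    ncard_pairs_inter_union_eq hWX fun I J => (M.Indep I ∧ I.ncard = i) ∧ (M.Indep J ∧ J.ncard = j),
    pi2, restrict_union_contract_ground hXY]
  congr 2
  ext ⟨A, B⟩
  constructor
  · rintro ⟨⟨hAB, hdisj⟩, hA, hB⟩
    obtain ⟨hA, hAc⟩ := (key A (hAB ▸ Set.subset_union_left) i).1 hA
    obtain ⟨hB, hBc⟩ := (key B (hAB ▸ Set.subset_union_right) j).1 hB
    exact ⟨hAB, hdisj, hA, hB, hAc, hBc⟩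
  · rintro ⟨hAB, hdisj, hA, hB, hAc, hBc⟩
    exact ⟨⟨hAB, hdisj⟩, (key A (hAB ▸ Set.subset_union_left) i).2 ⟨hA, hAc⟩,
      (key B (hAB ▸ Set.subset_union_right) j).2 ⟨hB, hBc⟩⟩

theorem fk_sq_ge_one_add_inv_iff_pi2_general {α : Type*} [Fintype α] (M : Matroid α)
    (l : ℕ) (hl : 0 < l) :
    (∀ d : α →₀ ℕ,
        (1 + 1 / (l : ℝ)) * MvPolynomial.coeff d (fk M (l - 1) * fk M (l + 1)) ≤
          MvPolynomial.coeff d ((fk M l) ^ 2)) ↔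
      (∀ k : ℕ, k ≤ l → ∀ X Y : Set α, X ⊆ M.E → Y ⊆ M.E → Disjoint X Y →
        X.ncard = 2 * k → rkIn M Y = l - k →
        (1 + 1 / (l : ℝ)) *
            (pi2 (mcontract (M ↾ (X ∪ Y)) Y) ((k : ℤ) - 1) ((k : ℤ) + 1) : ℝ) ≤
          (pi2 (mcontract (M ↾ (X ∪ Y)) Y) (k : ℤ) (k : ℤ) : ℝ)) := by
  constructor
  · intro h k hk X Y _ hY hXY _ hrk
    obtain ⟨W, hW⟩ := M.exists_isBasis Y hY
    lift W to Finset α using W.toFinite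
    lift X to Finset α using X.toFinite
    have hWk : #W = l - k := by
      rw [← Set.ncard_coe_finset, ← hW.rkIn_eq_ncard W.finite_toSet, hrk]
    have hcoeff := h (2 • sqfreeExp W + sqfreeExp X)
    rw [sq, coeff_fk_mul_eq_pi2 M hXY hW, coeff_fk_mul_eq_pi2 M hXY hW] at hcoeff
    convert hcoeff using 4 <;> omega
  · intro h d
    by_cases hd : coeff d (fk M (l - 1) * fk M (l + 1)) = 0
    · rw [hd, mul_zero, sq, coeff_fk_mul]
      positivity
    obtain ⟨W, X, hWX, hW, hXE, hWl, hcard, rfl⟩ := exists_eq_of_coeff_fk_mul_ne_zero hd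
    have hXW : Disjoint (X : Set α) W := Finset.disjoint_coe.mpr hWX.symm
    have hk := h (l - #W) (by omega) X W hXE hW.subset_ground hXW
      (by rw [Set.ncard_coe_finset]; omega)
      (by rw [hW.isBasis_self.rkIn_eq_ncard W.finite_toSet, Set.ncard_coe_finset]; omega)
    rw [sq, coeff_fk_mul_eq_pi2 M hXW hW.isBasis_self,
      coeff_fk_mul_eq_pi2 M hXW hW.isBasis_self]
    convert hk using 4 <;> omega

/-- Zhao's criterion: for a matroid `M` on a finite ground set and `l ≥ 1`, the
coefficientwise inequality `f_l(M)^2 ≥ (1 + 1/l) f_{l-1}(M) f_{l+1}(M)` holds if and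
only if, for every `k ≤ l` and all disjoint `X, Y ⊆ E` with `|X| = 2k` and
`r_M(Y) = l - k`, the minor `N = M(X ∪ Y)/Y` satisfies
`π_{k,k}(N) ≥ (1 + 1/l) π_{k-1,k+1}(N)`. -/
theorem fk_sq_ge_one_add_inv_iff_pi2 {α : Type*} [Fintype α] (M : Matroid α)
    (hE : M.E = Set.univ) (l : ℕ) (hl : 0 < l) :
    (∀ d : α →₀ ℕ,
        (1 + 1 / (l : ℝ)) * MvPolynomial.coeff d (fk M (l - 1) * fk M (l + 1)) ≤
          MvPolynomial.coeff d ((fk M l) ^ 2)) ↔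
      (∀ k : ℕ, k ≤ l → ∀ X Y : Set α, X ⊆ M.E → Y ⊆ M.E → Disjoint X Y →
        X.ncard = 2 * k → rkIn M Y = l - k →
        (1 + 1 / (l : ℝ)) *
            (pi2 (mcontract (M ↾ (X ∪ Y)) Y) ((k : ℤ) - 1) ((k : ℤ) + 1) : ℝ) ≤
          (pi2 (mcontract (M ↾ (X ∪ Y)) Y) (k : ℤ) (k : ℤ) : ℝ)) :=
  fk_sq_ge_one_add_inv_iff_pi2_general M l hl
end
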